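/- arXiv:1702.08534 — 2 statements merged into one kernel-verified Lean document; each statement's English description precedes it below -/
import Mathlib

section
/- Let M ≥ 2 be an integer and d ∈ ℤ. Let θ̃₀ : ℝ → ℝ be the 2π-periodic function such that for every ω ∈ [0, 2π), θ̃₀(ω) = (d + 1/2)(M − 1)ω − ⌊Mω/(2π)⌋·π. Then for every ω ≥ 0 the series β(ω) := ∑_{i=1}^{∞} θ̃₀(ω/M^{i}) converges, and for every k ∈ ℕ and every ω ∈ [2kπ, 2(k+1)π), β(ω) ≡ (d + 1/2)ω − kπ (mod 2π). -/
/-!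
Write `⌊x⌋₂π := ⌊x / 2π⌋`. Reducing `x` modulo `2π` gives, for every real `x`,
`θ₀ x = (d + 1/2)(M - 1) x - (⌊M x⌋₂π - ⌊x⌋₂π) π - 2π d (M - 1) ⌊x⌋₂π`.
At `x = ω / M^(i+1)` the linear terms form a geometric series with sum `(d + 1/2) ω`, the
middle terms telescope because `M x = ω / M^i`, and since `ω / M^i < 2π` for large `i`
all floors eventually vanish, so the remaining terms are finitely many multiples of `2π`.
What is left is `(d + 1/2) ω - ⌊ω⌋₂π π`, and `⌊ω⌋₂π = k` on `[2kπ, 2(k+1)π)`.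
-/

open Real

lemma hasSum_div_pow_succ {b : ℝ} (hb : 1 < b) (y : ℝ) :
    HasSum (fun i : ℕ => y / b ^ (i + 1)) (y / (b - 1)) := by
  have hb0 : 0 < b := by linarith
  have hgeom := (hasSum_geometric_of_lt_one (inv_nonneg.2 hb0.le) (inv_lt_one_of_one_lt₀ hb)).mul_left
    (y / b)
  have hterm : (fun i : ℕ => y / b * b⁻¹ ^ i) = fun i => y / b ^ (i + 1) := by
    funext i
    rw [inv_pow, pow_succ']
    field_simp
  have hsum : y / b * (1 - b⁻¹)⁻¹ = y / (b - 1) := by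
    field_simp [(sub_pos.2 hb).ne']
  rwa [hterm, hsum] at hgeom

lemma exists_floor_div_pow_div_eq_zero {y b p : ℝ} (hy : 0 ≤ y) (hb : 1 < b) (hp : 0 < p) :
    ∃ N : ℕ, ∀ i ≥ N, ⌊y / b ^ i / p⌋ = 0 := by
  obtain ⟨N, hN⟩ := pow_unbounded_of_one_lt (y / p) hb
  refine ⟨N, fun i hi => Int.floor_eq_zero_iff.2 ⟨by positivity, ?_⟩⟩
  have hbi : 0 < b ^ i := pow_pos (by linarith) i
  calc y / b ^ i / p = y / p / b ^ i := div_right_comm _ _ _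
    _ < 1 := (div_lt_one hbi).2 (hN.trans_le (pow_le_pow_right₀ hb.le hi))

lemma hasSum_sub_succ_of_eq_zero {G : Type*} [AddCommGroup G] [TopologicalSpace G]
    {f : ℕ → G} {N : ℕ} (hf : ∀ i ≥ N, f i = 0) :
    HasSum (fun i => f i - f (i + 1)) (f 0) := by
  have hsupp : ∀ i ∉ Finset.range N, f i - f (i + 1) = 0 := fun i hi => by
    have hi : N ≤ i := by simpa using hi
    rw [hf i hi, hf (i + 1) (by omega), sub_zero]
  have hsum : HasSum (fun i => f i - f (i + 1)) (∑ i ∈ Finset.range N, (f i - f (i + 1))) :=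
    hasSum_sum_of_ne_finset_zero hsupp
  rwa [Finset.sum_range_sub', hf N le_rfl, sub_zero] at hsum

section Phase

variable {M : ℕ} {d : ℤ} {θ₀ : ℝ → ℝ}
  (hper : ∀ ω : ℝ, θ₀ (ω + 2 * π) = θ₀ ω)
  (hval : ∀ ω : ℝ, 0 ≤ ω → ω < 2 * π →
    θ₀ ω = ((d : ℝ) + 1 / 2) * ((M : ℝ) - 1) * ω - (⌊(M : ℝ) * ω / (2 * π)⌋ : ℝ) * π)
include hper hval

lemma phase_eq_linear_sub_floor (x : ℝ) :
    θ₀ x = ((d : ℝ) + 1 / 2) * ((M : ℝ) - 1) * x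
      - ((⌊(M : ℝ) * x / (2 * π)⌋ : ℝ) - ⌊x / (2 * π)⌋) * π
      - 2 * π * ((d * ((M : ℤ) - 1) * ⌊x / (2 * π)⌋ : ℤ) : ℝ) := by
  have h2π : 0 < 2 * π := by positivity
  set q := ⌊x / (2 * π)⌋
  have hfloor : ⌊(M : ℝ) * (x - q * (2 * π)) / (2 * π)⌋ = ⌊(M : ℝ) * x / (2 * π)⌋ - M * q := by
    rw [← Int.floor_sub_intCast]
    congr 1
    field_simp
    push_cast
    ring
  rw [← (show Function.Periodic θ₀ (2 * π) from hper).sub_int_mul_eq q,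
    hval _ (Int.sub_floor_div_mul_nonneg x h2π) (Int.sub_floor_div_mul_lt x h2π), hfloor]
  push_cast
  ring

lemma hasSum_phase (hM : 1 < M) {ω : ℝ} (hω : 0 ≤ ω) :
    ∃ n : ℤ, HasSum (fun i : ℕ => θ₀ (ω / (M : ℝ) ^ (i + 1)))
      (((d : ℝ) + 1 / 2) * ω - (⌊ω / (2 * π)⌋ : ℝ) * π + 2 * π * n) := by
  have hM' : (1 : ℝ) < M := by exact_mod_cast hM
  set B : ℕ → ℤ := fun i => ⌊ω / (M : ℝ) ^ i / (2 * π)⌋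
  obtain ⟨N, hN⟩ := exists_floor_div_pow_div_eq_zero hω hM' (by positivity : 0 < 2 * π)
  set m : ℕ → ℤ := fun i => d * ((M : ℤ) - 1) * B (i + 1)
  have hm : ∀ i ∉ Finset.range N, (m i : ℝ) = 0 := fun i hi => by
    have hi : N ≤ i := by simpa using hi
    simp [m, B, hN (i + 1) (by omega)]
  have hlin := (hasSum_div_pow_succ hM' ω).mul_left (((d : ℝ) + 1 / 2) * ((M : ℝ) - 1))
  have htel := (hasSum_sub_succ_of_eq_zero (f := fun i => (B i : ℝ)) (N := N)
    (fun i hi => by simp [B, hN i hi])).mul_right π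
  have hint : HasSum (fun i => 2 * π * (m i : ℝ)) (2 * π * ∑ i ∈ Finset.range N, (m i : ℝ)) :=
    (hasSum_sum_of_ne_finset_zero hm).mul_left (2 * π)
  have hterm : (fun i : ℕ => θ₀ (ω / (M : ℝ) ^ (i + 1))) = fun i =>
      ((d : ℝ) + 1 / 2) * ((M : ℝ) - 1) * (ω / (M : ℝ) ^ (i + 1))
        - ((B i : ℝ) - B (i + 1)) * π - 2 * π * (m i : ℝ) := by
    funext i
    have hMx : (M : ℝ) * (ω / (M : ℝ) ^ (i + 1)) = ω / (M : ℝ) ^ i := by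
      rw [pow_succ]
      field_simp
    rw [phase_eq_linear_sub_floor hper hval, hMx]
  have hlim : ((d : ℝ) + 1 / 2) * ω - (⌊ω / (2 * π)⌋ : ℝ) * π
      + 2 * π * ((-∑ i ∈ Finset.range N, m i : ℤ) : ℝ)
      = ((d : ℝ) + 1 / 2) * ((M : ℝ) - 1) * (ω / ((M : ℝ) - 1)) - (B 0 : ℝ) * π
        - 2 * π * ∑ i ∈ Finset.range N, (m i : ℝ) := by
    simp only [B, pow_zero, div_one]
    push_cast
    field_simp [(sub_pos.2 hM').ne']
    ring
  refine ⟨-∑ i ∈ Finset.range N, m i, ?_⟩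
  rw [hterm, hlim]
  exact (hlin.sub htel).sub hint

end Phase

/-- Explicit formula for the cumulative phase β of the dual low-pass filter
(Appendix A of the paper, converse part of Proposition 2). -/
theorem stmt_4 (M : ℕ) (hM : 2 ≤ M) (d : ℤ) (θ₀ : ℝ → ℝ)
    (hper : ∀ ω : ℝ, θ₀ (ω + 2 * π) = θ₀ ω)
    (hval : ∀ ω : ℝ, 0 ≤ ω → ω < 2 * π →
      θ₀ ω = ((d : ℝ) + 1 / 2) * ((M : ℝ) - 1) * ω - (⌊(M : ℝ) * ω / (2 * π)⌋ : ℝ) * π) :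
    (∀ ω : ℝ, 0 ≤ ω → Summable (fun i : ℕ => θ₀ (ω / (M : ℝ) ^ (i + 1)))) ∧
    (∀ k : ℕ, ∀ ω : ℝ, 2 * k * π ≤ ω → ω < 2 * ((k : ℝ) + 1) * π →
      ∃ n : ℤ, (∑' i : ℕ, θ₀ (ω / (M : ℝ) ^ (i + 1)))
        = ((d : ℝ) + 1 / 2) * ω - k * π + 2 * π * n) := by
  refine ⟨fun ω hω => (hasSum_phase hper hval hM hω).choose_spec.summable, ?_⟩
  intro k ω hlo hhi
  obtain ⟨n, hn⟩ := hasSum_phase hper hval hM (le_trans (by positivity) hlo)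
  have hk : ⌊ω / (2 * π)⌋ = k := by
    rw [Int.floor_eq_iff, le_div_iff₀ (by positivity), div_lt_iff₀ (by positivity)]
    push_cast
    constructor <;> linarith
  exact ⟨n, by rw [hn.tsum_eq, hk, Int.cast_natCast]⟩
end

section
/- Let M ≥ 2 be an integer, d ∈ ℤ, k₀ ∈ ℤ. Let h, g : ℤ → ℝ be absolutely summable sequences with Fourier transforms H(ω) = ∑_{k∈ℤ} h[k] e^{-ikω} and G(ω) = ∑_{k∈ℤ} g[k] e^{-ikω}. Let θ₀ : ℝ → ℝ satisfy: for every ω ∈ ℝ there exists n ∈ ℤ with 2θ₀(ω) = (2d+1)(M−1)ω + 2πn, and suppose G(ω) = e^{-iθ₀(ω)} H(ω) for every ω ∈ ℝ. If h[2k₀ − k] = h[k] for every k ∈ ℤ, then g[2k₀ + (2d+1)(M−1) − k] = g[k] for every k ∈ ℤ. -/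
/-!
A real sequence `a` is symmetric about `c / 2`, i.e. `a (c - k) = a k`, exactly when its Fourier
transform has linear phase, `conj (A ω) = e^{i c ω} A ω`: reflecting the sequence conjugates the
transform up to the factor `e^{-i c ω}`, and an absolutely summable sequence is recovered from its
transform by integrating against `e^{i m ω}` over a period. For `G = e^{-iθ₀} H` with `h` symmetric
about `k₀`, `conj G = e^{i (2θ₀ + 2 k₀ ω)} G`, and `2θ₀ ≡ (2d+1)(M-1) ω` modulo `2π`.
-/

open Real Complex ComplexConjugate

noncomputable def dtft (a : ℤ → ℝ) (ω : ℝ) : ℂ :=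
  ∑' k : ℤ, (a k : ℂ) * cexp (-(((k : ℝ) * ω : ℝ) : ℂ) * I)

theorem integral_exp_int_mul_I (n : ℤ) :
    ∫ ω in (0 : ℝ)..2 * π, cexp (((n * ω : ℝ) : ℂ) * I) = if n = 0 then 2 * π else 0 := by
  split_ifs with hn
  · simp [hn]
  have hnI : (n : ℂ) * I ≠ 0 := by simpa using hn
  have := integral_exp_mul_complex (a := 0) (b := 2 * π) hnI
  simp only [push_cast, mul_right_comm _ I] at this ⊢
  rw [this, mul_zero, zero_mul, Complex.exp_zero,
    show (n : ℂ) * (2 * π) * I = n * (2 * π * I) by ring, exp_int_mul_two_pi_mul_I, sub_self,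
    zero_div]

theorem dtft_comp_sub_left (a : ℤ → ℝ) (c : ℤ) (ω : ℝ) :
    dtft (fun k => a (c - k)) ω = cexp (-((c * ω : ℝ) : ℂ) * I) * conj (dtft a ω) := by
  rw [dtft, ← (Equiv.subLeft c).tsum_eq, dtft, conj_tsum, ← tsum_mul_left]
  congr 1 with k
  simp only [Equiv.subLeft_apply, sub_sub_cancel, map_mul, conj_ofReal, ← exp_conj]
  rw [mul_left_comm, ← Complex.exp_add]
  congr 2
  simp only [map_neg, conj_ofReal, conj_I]
  push_cast
  ring

theorem conj_dtft_of_symm {a : ℤ → ℝ} {c : ℤ} (ha : ∀ k, a (c - k) = a k) (ω : ℝ) :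
    conj (dtft a ω) = cexp (((c * ω : ℝ) : ℂ) * I) * dtft a ω := by
  conv_rhs => rw [← funext ha, dtft_comp_sub_left, ← mul_assoc, ← Complex.exp_add]
  simp

theorem integral_exp_mul_dtft {a : ℤ → ℝ} (ha : Summable fun k => |a k|) (m : ℤ) :
    ∫ ω in (0 : ℝ)..2 * π, cexp (((m * ω : ℝ) : ℂ) * I) * dtft a ω = 2 * π * a m := by
  let f : ℤ → C(ℝ, ℂ) := fun k =>
    ⟨fun ω => a k * cexp ((((m - k : ℤ) : ℝ) * ω : ℝ) * I), by fun_prop⟩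
  have hf : Summable fun k =>
      ‖(f k).restrict (⟨Set.uIcc 0 (2 * π), isCompact_uIcc⟩ : TopologicalSpace.Compacts ℝ)‖ := by
    refine ha.of_nonneg_of_le (fun _ => norm_nonneg _) fun k => ?_
    refine (ContinuousMap.norm_le _ (abs_nonneg _)).2 fun ω => ?_
    simp only [f, ContinuousMap.restrict_apply, ContinuousMap.coe_mk, norm_mul,
      norm_exp_ofReal_mul_I, norm_real, Real.norm_eq_abs, mul_one, le_refl]
  have hsum : ∀ ω : ℝ, ∑' k, f k ω = cexp (((m * ω : ℝ) : ℂ) * I) * dtft a ω := by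
    intro ω
    rw [dtft, ← tsum_mul_left]
    congr 1 with k
    simp only [f, ContinuousMap.coe_mk, mul_left_comm _ (a k : ℂ), ← Complex.exp_add]
    push_cast
    ring_nf
  have hterm : ∀ k, ∫ ω in (0 : ℝ)..2 * π, f k ω = a k * if m - k = 0 then 2 * π else 0 := by
    intro k
    simp only [f, ContinuousMap.coe_mk]
    rw [intervalIntegral.integral_const_mul, integral_exp_int_mul_I]
  rw [← funext hsum, ← intervalIntegral.tsum_intervalIntegral_eq_of_summable_norm hf,
    tsum_eq_single m fun k hk => by simp [hterm, sub_eq_zero, Ne.symm hk], hterm]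
  simp only [sub_self, if_true]
  push_cast
  ring

theorem eq_of_dtft_eq {a b : ℤ → ℝ} (ha : Summable fun k => |a k|)
    (hb : Summable fun k => |b k|) (hab : dtft a = dtft b) : a = b := by
  funext m
  have h := integral_exp_mul_dtft ha m
  rw [hab, integral_exp_mul_dtft hb m] at h
  exact_mod_cast (mul_right_injective₀ (by simp [pi_ne_zero] : (2 * π : ℂ) ≠ 0) h).symm

theorem symm_of_conj_dtft {a : ℤ → ℝ} {c : ℤ} (ha : Summable fun k => |a k|)
    (h : ∀ ω, conj (dtft a ω) = cexp (((c * ω : ℝ) : ℂ) * I) * dtft a ω) (k : ℤ) :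
    a (c - k) = a k := by
  have hrefl : Summable fun k => |a (c - k)| := (Equiv.subLeft c).summable_iff.2 ha
  refine congrFun (eq_of_dtft_eq hrefl ha (funext fun ω => ?_)) k
  rw [dtft_comp_sub_left, h, ← mul_assoc, ← Complex.exp_add]
  simp

theorem stmt_8_general (M : ℕ) (d k₀ : ℤ) (h g : ℤ → ℝ)
    (hgs : Summable fun k : ℤ => |g k|)
    (θ₀ : ℝ → ℝ)
    (hθ : ∀ ω : ℝ, ∃ n : ℤ,
      2 * θ₀ ω = (2 * (d : ℝ) + 1) * ((M : ℝ) - 1) * ω + 2 * π * n)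
    (hGH : ∀ ω : ℝ,
      (∑' k : ℤ, (g k : ℂ) * Complex.exp (-(((k : ℝ) * ω : ℝ) : ℂ) * Complex.I))
        = Complex.exp (-(θ₀ ω : ℂ) * Complex.I) *
          ∑' k : ℤ, (h k : ℂ) * Complex.exp (-(((k : ℝ) * ω : ℝ) : ℂ) * Complex.I))
    (hsym : ∀ k : ℤ, h (2 * k₀ - k) = h k) :
    ∀ k : ℤ, g (2 * k₀ + (2 * d + 1) * ((M : ℤ) - 1) - k) = g k := by
  refine symm_of_conj_dtft hgs fun ω => ?_
  obtain ⟨n, hn⟩ := hθ ω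
  have hG : dtft g ω = cexp (-(θ₀ ω : ℂ) * I) * dtft h ω := hGH ω
  rw [hG, map_mul, ← exp_conj, conj_dtft_of_symm hsym, ← mul_assoc, ← mul_assoc,
    ← Complex.exp_add, ← Complex.exp_add, exp_eq_exp_iff_exists_int.2 ⟨n, ?_⟩]
  have hn' := congrArg ((↑) : ℝ → ℂ) hn
  simp only [map_mul, map_neg, conj_ofReal, conj_I]
  push_cast at hn' ⊢
  linear_combination I * hn'

/-- Low-pass part of Proposition 4: the dual low-pass filter inherits symmetry,
with center shifted by `(d + 1/2)(M − 1)`. -/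
theorem stmt_8 (M : ℕ) (hM : 2 ≤ M) (d k₀ : ℤ) (h g : ℤ → ℝ)
    (hhs : Summable fun k : ℤ => |h k|) (hgs : Summable fun k : ℤ => |g k|)
    (θ₀ : ℝ → ℝ)
    (hθ : ∀ ω : ℝ, ∃ n : ℤ,
      2 * θ₀ ω = (2 * (d : ℝ) + 1) * ((M : ℝ) - 1) * ω + 2 * π * n)
    (hGH : ∀ ω : ℝ,
      (∑' k : ℤ, (g k : ℂ) * Complex.exp (-(((k : ℝ) * ω : ℝ) : ℂ) * Complex.I))
        = Complex.exp (-(θ₀ ω : ℂ) * Complex.I) *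
          ∑' k : ℤ, (h k : ℂ) * Complex.exp (-(((k : ℝ) * ω : ℝ) : ℂ) * Complex.I))
    (hsym : ∀ k : ℤ, h (2 * k₀ - k) = h k) :
    ∀ k : ℤ, g (2 * k₀ + (2 * d + 1) * ((M : ℤ) - 1) - k) = g k :=
  stmt_8_general M d k₀ h g hgs θ₀ hθ hGH hsym
end
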